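/- For all α, β with 0 < α ≤ 1 and (1−α)/2 ≤ β ≤ (1+α)/2, one has f_A(1−α, β) ≤ h(β) − h(α). -/

import Mathlib

/-
`(1 - α) + α h((β - (1-α)/2)/α) + h(α)` is the joint entropy (in bits) of two
bits `(X, Y)` with `P(1,1) = β - (1-α)/2`, `P(0,0) = 1 - β - (1-α)/2` and
`P(0,1) = P(1,0) = (1-α)/2`: `h(α)` for whether `X = Y`, then `α h(·)` for the common value when
`X = Y` and one bit when `X ≠ Y`. Both marginals are Bernoulli(β), so subadditivity of entropy
bounds it by `2 h(β)`, which is the claim rearranged.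
-/

/-- Binary entropy function (base-2 logs), with the convention `0 * log 0 = 0`. -/
noncomputable def binEnt (x : ℝ) : ℝ :=
  -(x * Real.logb 2 x) - (1 - x) * Real.logb 2 (1 - x)

/-- The spectral shape exponent of the accumulator:
`f_A(α,β) = α − h(β) + (1−α)·h((β−α/2)/(1−α))`. -/
noncomputable def fA (α β : ℝ) : ℝ :=
  α - binEnt β + (1 - α) * binEnt ((β - α / 2) / (1 - α))

/-- The spectral shape exponent of the discrete derivative:
`f_D(α,β) = (1−α)·h(β/(2(1−α))) + α·h(β/(2α)) − h(α)`. -/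
noncomputable def fD (α β : ℝ) : ℝ :=
  (1 - α) * binEnt (β / (2 * (1 - α))) + α * binEnt (β / (2 * α)) - binEnt α

open Real

lemma binEnt_eq_binEntropy_div_log_two (x : ℝ) : binEnt x = binEntropy x / log 2 := by
  simp only [binEnt, binEntropy_eq_negMulLog_add_negMulLog_one_sub, negMulLog, logb]
  ring

lemma sub_mul_le_mul_log_sub_mul_log_sub_mul_log {p x y : ℝ} (hp : 0 ≤ p) (hpx : p ≤ x)
    (hpy : p ≤ y) : p - x * y ≤ p * log p - p * log x - p * log y := by
  rcases hp.eq_or_lt with rfl | hp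
  · simpa using mul_nonneg (hp.trans hpx) (hp.trans hpy)
  have hxy : 0 < x * y := mul_pos (hp.trans_le hpx) (hp.trans_le hpy)
  have h := log_le_sub_one_of_pos (div_pos hxy hp)
  rw [log_div hxy.ne' hp.ne', log_mul (hp.trans_le hpx).ne' (hp.trans_le hpy).ne'] at h
  have h' := mul_le_mul_of_nonneg_left h hp.le
  rw [mul_sub, mul_sub, mul_div_cancel₀ _ hp.ne'] at h'
  linarith

lemma negMulLog_add_four_le_binEntropy_add_binEntropy {a b c d : ℝ} (ha : 0 ≤ a) (hb : 0 ≤ b)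
    (hc : 0 ≤ c) (hd : 0 ≤ d) (hsum : a + b + c + d = 1) :
    negMulLog a + negMulLog b + negMulLog c + negMulLog d ≤
      binEntropy (a + b) + binEntropy (a + c) := by
  -- Gibbs' inequality for the law `(a b; c d)` against the product of its marginals.
  have hab : 1 - (a + b) = c + d := by linarith
  have hac : 1 - (a + c) = b + d := by linarith
  rw [binEntropy_eq_negMulLog_add_negMulLog_one_sub, binEntropy_eq_negMulLog_add_negMulLog_one_sub,
    hab, hac]
  have gibbs_a := sub_mul_le_mul_log_sub_mul_log_sub_mul_log (x := a + b) (y := a + c) ha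
    (by linarith) (by linarith)
  have gibbs_b := sub_mul_le_mul_log_sub_mul_log_sub_mul_log (x := a + b) (y := b + d) hb
    (by linarith) (by linarith)
  have gibbs_c := sub_mul_le_mul_log_sub_mul_log_sub_mul_log (x := c + d) (y := a + c) hc
    (by linarith) (by linarith)
  have gibbs_d := sub_mul_le_mul_log_sub_mul_log_sub_mul_log (x := c + d) (y := b + d) hd
    (by linarith) (by linarith)
  have product_mass : (a + b) * (a + c) + (a + b) * (b + d) + (c + d) * (a + c)
      + (c + d) * (b + d) = a + b + c + d := by
    linear_combination (a + b + c + d) * hsum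
  simp only [negMulLog]
  linear_combination gibbs_a + gibbs_b + gibbs_c + gibbs_d + product_mass

lemma negMulLog_add_negMulLog_sub (x : ℝ) {a : ℝ} (ha : a ≠ 0) :
    negMulLog x + negMulLog (a - x) = negMulLog a + a * binEntropy (x / a) := by
  have hx : x = a * (x / a) := by field_simp
  have hax : a - x = a * (1 - x / a) := by field_simp
  rw [binEntropy_eq_negMulLog_add_negMulLog_one_sub]
  nth_rw 1 [hx, hax, negMulLog_mul, negMulLog_mul]
  ring

lemma two_mul_negMulLog_half (t : ℝ) : 2 * negMulLog (t / 2) = negMulLog t + t * log 2 := by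
  rw [div_eq_mul_inv, negMulLog_mul]
  simp only [negMulLog, log_inv]
  ring

/-- `f_A(1−α,β) ≤ h(β) − h(α)` for `0 < α ≤ 1` and `(1−α)/2 ≤ β ≤ (1+α)/2`. -/
theorem fA_one_sub_le_entropy_diff (α β : ℝ) (hα0 : 0 < α) (hα1 : α ≤ 1)
    (hβl : (1 - α) / 2 ≤ β) (hβu : β ≤ (1 + α) / 2) :
    fA (1 - α) β ≤ binEnt β - binEnt α := by
  set c := (1 - α) / 2 with hc
  have joint_entropy_le : (1 - α) * log 2 + α * binEntropy ((β - c) / α) + binEntropy α ≤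
      2 * binEntropy β := by
    have chain := negMulLog_add_negMulLog_sub (β - c) hα0.ne'
    have half := two_mul_negMulLog_half (1 - α)
    have subadd := negMulLog_add_four_le_binEntropy_add_binEntropy (a := β - c) (b := c) (c := c)
      (d := α - (β - c)) (by linarith) (by linarith) (by linarith) (by linarith) (by ring)
    rw [sub_add_cancel] at subadd
    rw [binEntropy_eq_negMulLog_add_negMulLog_one_sub α]
    linarith
  have hlog2 : 0 < log 2 := log_pos one_lt_two
  rw [fA, sub_sub_cancel]
  simp only [binEnt_eq_binEntropy_div_log_two]
  generalize binEntropy ((β - c) / α) = e at joint_entropy_le ⊢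
  field_simp
  linarith
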